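/- arXiv:1505.02169 — 3 statements merged into one kernel-verified Lean document; each statement's English description precedes it below -/
import Mathlib

section
/- Let K/F be a finite Galois extension of fields with Galois group Γ, and let n be a positive integer. Then every 1-cocycle c : Γ → GL_n(K) (i.e., a function satisfying c(στ) = c(σ) · σ(c(τ)) for all σ, τ ∈ Γ, where σ acts entrywise on matrices) is a coboundary: there exists b ∈ GL_n(K) such that c(σ) = b · σ(b)⁻¹ for all σ ∈ Γ. -/
/-!
Average against the cocycle: for `x ∈ Kⁿ` put `P x = ∑_σ c(σ) σ(x)`. The cocycle identity makes
every `P x` a fixed vector of the twisted action `v ↦ c(τ) τ(v)`. Dedekind's independence of the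
automorphisms shows that the `P x` span `Kⁿ`, so `n` linearly independent ones among them are the
columns of an invertible matrix `b` with `c(τ) τ(b) = b`.
-/

open Matrix

theorem Module.Basis.exists_linearIndependent_of_span_eq_top {ι K V : Type*} [Field K]
    [AddCommGroup V] [Module K V] (b : Module.Basis ι K V) {s : Set V}
    (hs : Submodule.span K s = ⊤) : ∃ v : ι → V, (∀ i, v i ∈ s) ∧ LinearIndependent K v := by
  obtain ⟨t, hts, htspan, htli⟩ := exists_linearIndependent K s
  let bt : Module.Basis t K V := .mk htli (by rw [Subtype.range_coe, htspan, hs])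
  let e := bt.indexEquiv b
  exact ⟨fun i => e.symm i, fun i => hts (e.symm i).2, htli.comp e.symm e.symm.injective⟩

theorem linearIndependent_algEquiv_coeFn (F K : Type*) [Field F] [Field K] [Algebra F K] :
    LinearIndependent K (fun σ : K ≃ₐ[F] K => (σ : K → K)) :=
  (linearIndependent_monoidHom K K).comp (ι' := K ≃ₐ[F] K) (fun σ => σ)
    fun _ _ h => AlgEquiv.ext fun x => DFunLike.ext_iff.1 h x

namespace GaloisCocycle

variable {F K ι : Type*} [Field F] [Field K] [Algebra F K] [Fintype ι] [DecidableEq ι]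

theorem apply_one {c : (K ≃ₐ[F] K) → GL ι K}
    (hc : ∀ σ τ, (c (σ * τ) : Matrix ι ι K) = c σ * (c τ : Matrix ι ι K).map σ) : c 1 = 1 := by
  have h := hc 1 1
  rw [mul_one] at h
  have hmap : (c 1 : Matrix ι ι K).map (1 : K ≃ₐ[F] K) = c 1 := by
    ext; rfl
  rw [hmap, ← Units.val_mul] at h
  exact mul_eq_left.mp (Units.ext h.symm)

variable [FiniteDimensional F K]

noncomputable def average (c : (K ≃ₐ[F] K) → GL ι K) (x : ι → K) : ι → K :=
  ∑ σ, (c σ : Matrix ι ι K) *ᵥ (σ ∘ x)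

theorem mulVec_comp_average {c : (K ≃ₐ[F] K) → GL ι K}
    (hc : ∀ σ τ, (c (σ * τ) : Matrix ι ι K) = c σ * (c τ : Matrix ι ι K).map σ)
    (τ : K ≃ₐ[F] K) (x : ι → K) :
    (c τ : Matrix ι ι K) *ᵥ (τ ∘ average c x) = average c x := by
  have hτ : ∀ σ : K ≃ₐ[F] K, τ ∘ ((c σ : Matrix ι ι K) *ᵥ (σ ∘ x))
      = (c σ : Matrix ι ι K).map τ *ᵥ ((τ * σ : K ≃ₐ[F] K) ∘ x) := fun σ => by
    ext i
    exact RingHom.map_mulVec (τ : K →+* K) _ _ i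
  calc (c τ : Matrix ι ι K) *ᵥ (τ ∘ average c x)
      = ∑ σ, (c (τ * σ) : Matrix ι ι K) *ᵥ ((τ * σ : K ≃ₐ[F] K) ∘ x) := by
        have hsum : τ ∘ average c x = ∑ σ, τ ∘ ((c σ : Matrix ι ι K) *ᵥ (σ ∘ x)) := by
          ext i
          simp [average, Finset.sum_apply]
        simp only [hsum, hτ, mulVec_sum, mulVec_mulVec, hc]
    _ = average c x :=
        Fintype.sum_bijective (τ * ·) (Group.mulLeft_bijective τ) _ _ fun _ => rfl

theorem span_range_average {c : (K ≃ₐ[F] K) → GL ι K}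
    (hc : ∀ σ τ, (c (σ * τ) : Matrix ι ι K) = c σ * (c τ : Matrix ι ι K).map σ) :
    Submodule.span K (Set.range (average c)) = ⊤ := by
  by_contra h
  obtain ⟨f, hf0, hker⟩ :=
    Submodule.exists_dual_map_eq_bot_of_lt_top (lt_top_iff_ne_top.2 h) inferInstance
  have hf_average : ∀ x, f (average c x) = 0 := fun x => by
    have : f (average c x) ∈ (Submodule.span K (Set.range (average c))).map f :=
      Submodule.mem_map_of_mem (Submodule.subset_span ⟨x, rfl⟩)
    rwa [hker, Submodule.mem_bot] at this
  -- `f (average c (y • x)) = ∑_σ σ(y) f (c σ *ᵥ σ x)` vanishes for all `y`, so by Dedekind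
  -- every coefficient does, in particular the one at `σ = 1`.
  have hf : ∀ x, f x = 0 := fun x => by
    have hcoeff := Fintype.linearIndependent_iff.1 (linearIndependent_algEquiv_coeFn F K)
      (fun σ => f ((c σ : Matrix ι ι K) *ᵥ (σ ∘ x))) (funext fun y => by
        have hy := hf_average (y • x)
        have hcomp : ∀ σ : K ≃ₐ[F] K, σ ∘ (y • x) = σ y • (σ ∘ x) := fun σ => by
          ext i
          simp
        simpa [average, hcomp, mulVec_smul, mul_comm] using hy) 1
    simpa [apply_one hc, show ((1 : K ≃ₐ[F] K) : K → K) ∘ x = x from rfl] using hcoeff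
  exact hf0 (LinearMap.ext hf)

end GaloisCocycle

open GaloisCocycle in
theorem stmt_1_general (F K : Type*) [Field F] [Field K] [Algebra F K]
    [FiniteDimensional F K] (n : ℕ)
    (c : (K ≃ₐ[F] K) → GL (Fin n) K)
    (hc : ∀ σ τ : K ≃ₐ[F] K,
      ((c (σ * τ) : Matrix (Fin n) (Fin n) K))
        = (c σ : Matrix (Fin n) (Fin n) K) * ((c τ : Matrix (Fin n) (Fin n) K)).map σ) :
    ∃ b : GL (Fin n) K, ∀ σ : K ≃ₐ[F] K,
      (c σ : Matrix (Fin n) (Fin n) K) * ((b : Matrix (Fin n) (Fin n) K).map σ)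
        = (b : Matrix (Fin n) (Fin n) K) := by
  obtain ⟨v, hv, hli⟩ :=
    (Pi.basisFun K (Fin n)).exists_linearIndependent_of_span_eq_top (span_range_average hc)
  choose x hx using hv
  let B : Matrix (Fin n) (Fin n) K := (Matrix.of v)ᵀ
  have hB : IsUnit B := linearIndependent_cols_iff_isUnit.mp hli
  refine ⟨hB.unit, fun τ => ?_⟩
  ext j i
  simpa [B, ← hx i, mul_apply, mulVec, dotProduct] using
    congrFun (mulVec_comp_average hc τ (x i)) j

/-- Hilbert's Theorem 90 for `GL n`: every `1`-cocycle of the Galois group of a finite Galois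
extension `K/F` valued in `GL n K` is a coboundary. -/
theorem stmt_1 (F K : Type*) [Field F] [Field K] [Algebra F K]
    [IsGalois F K] [FiniteDimensional F K] (n : ℕ) (hn : 0 < n)
    (c : (K ≃ₐ[F] K) → GL (Fin n) K)
    (hc : ∀ σ τ : K ≃ₐ[F] K,
      ((c (σ * τ) : Matrix (Fin n) (Fin n) K))
        = (c σ : Matrix (Fin n) (Fin n) K) * ((c τ : Matrix (Fin n) (Fin n) K)).map σ) :
    ∃ b : GL (Fin n) K, ∀ σ : K ≃ₐ[F] K,
      (c σ : Matrix (Fin n) (Fin n) K) * ((b : Matrix (Fin n) (Fin n) K).map σ)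
        = (b : Matrix (Fin n) (Fin n) K) :=
  stmt_1_general F K n c hc
end

section
/- Let f : ℝ → ℂ be a Schwartz function. Then for every N ∈ ℕ there exists a constant C such that for all t ∈ (0, 1]: | t · Σ_{n ∈ ℤ} f(t·n) − ∫_ℝ f(x) dx | ≤ C · t^N. -/
/-!
By Poisson summation, `t · Σₙ f(tn) = Σₘ 𝓕f(m/t)`, and the term `m = 0` is `∫ f`. Since `𝓕f` is
again a Schwartz function, `‖𝓕f(m/t)‖ ≤ C (t/|m|)^(N+2) ≤ C tᴺ / m²` for `m ≠ 0` and `t ≤ 1`,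
and these bounds sum to `O(tᴺ)`.
-/

open MeasureTheory FourierTransform

section
variable {E : Type*} [NormedAddCommGroup E] [NormedSpace ℂ E]

theorem Real.fourier_comp_mul_right (f : ℝ → E) {t : ℝ} (ht : t ≠ 0) (ξ : ℝ) :
    𝓕 (fun x ↦ f (x * t)) ξ = |t⁻¹| • 𝓕 f (ξ / t) := by
  simp only [Real.fourier_eq', RCLike.inner_apply, conj_trivial]
  rw [← Measure.integral_comp_mul_right]
  congr 1 with x
  rw [show ξ / t * (x * t) = ξ * x by field_simp]

theorem Real.fourier_apply_zero (f : ℝ → E) : 𝓕 f 0 = ∫ x, f x := by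
  simp [Real.fourier_eq]

end

theorem norm_comp_div_le_of_norm_pow_mul_le {E : Type*} [SeminormedAddCommGroup E] {g : ℝ → E}
    {C : ℝ} {k : ℕ} (hg : ∀ x, ‖x‖ ^ (k + 2) * ‖g x‖ ≤ C) {t : ℝ} (ht₀ : 0 < t) (ht₁ : t ≤ 1)
    {m : ℤ} (hm : m ≠ 0) : ‖g (m / t)‖ ≤ C * t ^ k * ((m : ℝ) ^ 2)⁻¹ := by
  have hm₁ : 1 ≤ |(m : ℝ)| := by exact_mod_cast Int.one_le_abs hm
  have ht₁' : 1 ≤ t⁻¹ := one_le_inv₀ ht₀ |>.mpr ht₁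
  have hx : ‖(m : ℝ) / t‖ = |(m : ℝ)| * t⁻¹ := by
    rw [norm_div, Real.norm_eq_abs, Real.norm_eq_abs, abs_of_pos ht₀, div_eq_mul_inv]
  have hnorm_pow : t⁻¹ ^ k * (m : ℝ) ^ 2 ≤ ‖(m : ℝ) / t‖ ^ (k + 2) := by
    rw [pow_add, hx, ← sq_abs (m : ℝ)]
    gcongr
    · exact le_mul_of_one_le_left (by positivity) hm₁
    · exact le_mul_of_one_le_right (by positivity) ht₁'
  have hpos : 0 < t⁻¹ ^ k * (m : ℝ) ^ 2 := by positivity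
  calc ‖g (m / t)‖ ≤ C / (t⁻¹ ^ k * (m : ℝ) ^ 2) := by
        rw [le_div_iff₀ hpos, mul_comm]
        exact (mul_le_mul_of_nonneg_right hnorm_pow (norm_nonneg _)).trans (hg _)
    _ = C * t ^ k * ((m : ℝ) ^ 2)⁻¹ := by
        rw [inv_pow, div_mul_eq_div_div, div_inv_eq_mul, div_eq_mul_inv]

theorem norm_tsum_comp_div_sub_le_of_norm_pow_mul_le {E : Type*} [NormedAddCommGroup E]
    [CompleteSpace E] {g : ℝ → E} {C : ℝ} {k : ℕ} (hg : ∀ x, ‖x‖ ^ (k + 2) * ‖g x‖ ≤ C)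
    {t : ℝ} (ht₀ : 0 < t) (ht₁ : t ≤ 1) :
    ‖∑' m : ℤ, g (m / t) - g 0‖ ≤ C * (∑' m : ℤ, ((m : ℝ) ^ 2)⁻¹) * t ^ k := by
  have hbound (m : ℤ) (hm : m ≠ 0) : ‖g (m / t)‖ ≤ C * t ^ k * ((m : ℝ) ^ 2)⁻¹ :=
    norm_comp_div_le_of_norm_pow_mul_le hg ht₀ ht₁ hm
  have hinv : Summable fun m : ℤ ↦ ((m : ℝ) ^ 2)⁻¹ := by
    simpa only [one_div] using Real.summable_one_div_int_pow.mpr one_lt_two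
  have hmaj := hinv.hasSum.mul_left (C * t ^ k)
  have hsum : Summable fun m : ℤ ↦ g (m / t) :=
    .of_norm_bounded_eventually hmaj.summable <| by
      filter_upwards [Filter.eventually_cofinite_ne 0] using hbound
  rw [hsum.tsum_eq_add_tsum_ite 0, Int.cast_zero, zero_div, add_sub_cancel_left, mul_right_comm]
  -- the majorant is valid at `m = 0` too, its term there being `C tᵏ (0 ^ 2)⁻¹ = 0`
  refine tsum_of_norm_bounded hmaj fun m ↦ ?_
  split_ifs with hm
  · simp [hm]
  · exact hbound m hm

theorem SchwartzMap.mul_tsum_comp_mul_eq_tsum_fourier (f : SchwartzMap ℝ ℂ) {t : ℝ}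
    (ht : 0 < t) :
    (t : ℂ) * ∑' n : ℤ, f (t * n) = ∑' m : ℤ, 𝓕 f (m / t) := by
  let g : SchwartzMap ℝ ℂ := compCLMOfContinuousLinearEquiv ℝ
    (ContinuousLinearEquiv.unitsEquivAut ℝ (Units.mk0 t ht.ne')) f
  have hg : ⇑g = fun x ↦ f (x * t) := rfl
  have hpoisson := g.tsum_eq_tsum_fourier 0
  simp only [zero_add, QuotientAddGroup.mk_zero, fourier_eval_zero, mul_one, fourier_coe, hg,
    Real.fourier_comp_mul_right _ ht.ne', abs_inv, abs_of_pos ht] at hpoisson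
  simp_rw [mul_comm t, hpoisson, fourier_coe, Complex.real_smul, tsum_mul_left, ← mul_assoc,
    Complex.ofReal_inv]
  rw [mul_inv_cancel₀ (by exact_mod_cast ht.ne'), one_mul]

/-- For a Schwartz function `f : ℝ → ℂ` and every `N`, `t·Σ_{n∈ℤ} f(tn)` differs from
`∫ f` by `O(t^N)` on `(0, 1]`. -/
theorem stmt_4 (f : SchwartzMap ℝ ℂ) (N : ℕ) :
    ∃ C : ℝ, ∀ t ∈ Set.Ioc (0 : ℝ) 1,
      ‖(t : ℂ) * (∑' n : ℤ, f (t * (n : ℝ))) - ∫ x : ℝ, f x‖ ≤ C * t ^ N := by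
  refine ⟨SchwartzMap.seminorm ℝ (N + 2) 0 (𝓕 f) * ∑' m : ℤ, ((m : ℝ) ^ 2)⁻¹,
    fun t ⟨ht₀, ht₁⟩ ↦ ?_⟩
  rw [f.mul_tsum_comp_mul_eq_tsum_fourier ht₀, ← Real.fourier_apply_zero]
  exact norm_tsum_comp_div_sub_le_of_norm_pow_mul_le
    ((𝓕 f).norm_pow_mul_le_seminorm ℝ (N + 2)) ht₀ ht₁
end

section
/- Fix σ ∈ ℂ with σ ≠ 0. Let W_σ be the space of smooth functions f : (0,∞) → ℂ that decay rapidly at ∞ and such that there exists c ∈ ℂ with f(t) − c·t^σ = O(t^N) as t → 0⁺ for every N (where t^σ := exp(σ log t)); the constant c = c(f) is uniquely determined. Define the regularized integral Λ(f) := ∫_0^1 (f(t) − c·t^σ) dt/t + ∫_1^∞ f(t) dt/t + c/σ. Then Λ is a linear functional on W_σ which is scaling-invariant: Λ(f_a) = Λ(f) for every a > 0, where f_a(t) = f(at). -/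
open MeasureTheory

/-- Rapid decay at infinity. -/
def RapidDecayAtInfty (f : ℝ → ℂ) : Prop :=
  ∀ N : ℕ, ∃ C : ℝ, ∀ t : ℝ, 1 ≤ t → ‖f t‖ ≤ C / t ^ N

/-- `f(t) − c·t^σ` vanishes to infinite order at `0⁺`. -/
def HasLeadingCoeff (σ : ℂ) (f : ℝ → ℂ) (c : ℂ) : Prop :=
  ∀ N : ℕ, ∃ C : ℝ, ∀ t ∈ Set.Ioc (0 : ℝ) 1, ‖f t - c * (t : ℂ) ^ σ‖ ≤ C * t ^ N

/-- Membership in `W_σ`, with constant `c`. -/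
def MemWσ (σ : ℂ) (f : ℝ → ℂ) (c : ℂ) : Prop :=
  ContDiffOn ℝ (⊤ : ℕ∞) f (Set.Ioi 0) ∧ RapidDecayAtInfty f ∧ HasLeadingCoeff σ f c

/-- The regularized integral `Λ(f) = ∫_0^1 (f − c t^σ) dt/t + ∫_1^∞ f dt/t + c/σ`. -/
noncomputable def regInt (σ : ℂ) (f : ℝ → ℂ) (c : ℂ) : ℂ :=
  (∫ t in Set.Ioc (0 : ℝ) 1, (f t - c * (t : ℂ) ^ σ) / (t : ℂ))
    + (∫ t in Set.Ioi (1 : ℝ), f t / (t : ℂ)) + c / σ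

open Set Filter Topology

/-- Uniqueness of the leading coefficient. -/
private lemma hlc_unique {σ : ℂ} {f : ℝ → ℂ} {c c' : ℂ}
    (h : HasLeadingCoeff σ f c) (h' : HasLeadingCoeff σ f c') : c = c' := by
  set N : ℕ := ⌈σ.re⌉₊ + 1 with hN
  obtain ⟨C, hC⟩ := h N
  obtain ⟨C', hC'⟩ := h' N
  have hNσ : σ.re < (N : ℝ) :=
    lt_of_le_of_lt (Nat.le_ceil σ.re) (by exact_mod_cast Nat.lt_succ_self _)
  have key : ∀ t ∈ Ioc (0 : ℝ) 1, ‖c - c'‖ ≤ (C + C') * t ^ ((N : ℝ) - σ.re) := by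
    intro t ht
    have ht0 : 0 < t := ht.1
    have h1 : ‖(c - c') * (t : ℂ) ^ σ‖ ≤ (C + C') * t ^ N := by
      have he : (c - c') * (t : ℂ) ^ σ
          = (f t - c' * (t : ℂ) ^ σ) - (f t - c * (t : ℂ) ^ σ) := by ring
      rw [he]
      calc ‖(f t - c' * (t : ℂ) ^ σ) - (f t - c * (t : ℂ) ^ σ)‖
          ≤ ‖f t - c' * (t : ℂ) ^ σ‖ + ‖f t - c * (t : ℂ) ^ σ‖ := norm_sub_le _ _
        _ ≤ C' * t ^ N + C * t ^ N := add_le_add (hC' t ht) (hC t ht)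
        _ = (C + C') * t ^ N := by ring
    rw [norm_mul,
      Complex.norm_cpow_eq_rpow_re_of_pos ht0] at h1
    have ht' : (0 : ℝ) < t ^ σ.re := Real.rpow_pos_of_pos ht0 _
    calc ‖c - c'‖ ≤ (C + C') * t ^ N / t ^ σ.re := (le_div_iff₀ ht').mpr h1
      _ = (C + C') * t ^ ((N : ℝ) - σ.re) := by
          rw [Real.rpow_sub ht0, Real.rpow_natCast]; ring
  have hlim : Tendsto (fun t : ℝ => (C + C') * t ^ ((N : ℝ) - σ.re)) (𝓝[>] (0 : ℝ)) (𝓝 0) := by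
    have h0 : Tendsto (fun t : ℝ => t ^ ((N : ℝ) - σ.re)) (𝓝 (0 : ℝ)) (𝓝 0) := by
      have hc := Real.continuousAt_rpow_const 0 ((N : ℝ) - σ.re) (Or.inr (by linarith))
      have : (0 : ℝ) ^ ((N : ℝ) - σ.re) = 0 := Real.zero_rpow (by linarith)
      simpa [ContinuousAt, this] using hc
    simpa using ((h0.mono_left nhdsWithin_le_nhds).const_mul (C + C'))
  have hb : ‖c - c'‖ ≤ 0 := by
    refine ge_of_tendsto hlim ?_
    filter_upwards [Ioc_mem_nhdsGT_of_mem ⟨le_refl (0 : ℝ), zero_lt_one⟩] with t ht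
    exact key t ht
  have := le_antisymm hb (norm_nonneg _)
  simpa [sub_eq_zero] using this

private lemma cpow_contOn (σ : ℂ) : ContinuousOn (fun t : ℝ => (t : ℂ) ^ σ) (Ioi (0 : ℝ)) :=
  fun x hx =>
    (Complex.continuousAt_ofReal_cpow_const x σ (Or.inr (ne_of_gt hx))).continuousWithinAt

private lemma contH {σ : ℂ} {f : ℝ → ℂ} {c : ℂ} (hf : ContinuousOn f (Ioi (0 : ℝ))) :
    ContinuousOn (fun t : ℝ => (f t - c * (t : ℂ) ^ σ) / (t : ℂ)) (Ioi (0 : ℝ)) := by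
  refine (hf.sub (continuousOn_const.mul (cpow_contOn σ))).div
    (Complex.continuous_ofReal.continuousOn) ?_
  intro x hx
  exact_mod_cast ne_of_gt (show (0 : ℝ) < x from hx)

private lemma contG {f : ℝ → ℂ} (hf : ContinuousOn f (Ioi (0 : ℝ))) :
    ContinuousOn (fun t : ℝ => f t / (t : ℂ)) (Ioi (0 : ℝ)) := by
  refine hf.div (Complex.continuous_ofReal.continuousOn) ?_
  intro x hx
  exact_mod_cast ne_of_gt (show (0 : ℝ) < x from hx)

/-- Integrability of `(f t - c t^σ)/t` on `(0,1]`. -/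
private lemma intH01 {σ : ℂ} {f : ℝ → ℂ} {c : ℂ} (hf : ContinuousOn f (Ioi (0 : ℝ)))
    (hlc : HasLeadingCoeff σ f c) :
    IntegrableOn (fun t : ℝ => (f t - c * (t : ℂ) ^ σ) / (t : ℂ)) (Ioc 0 1) := by
  obtain ⟨C, hC⟩ := hlc 1
  have hmeas : AEStronglyMeasurable (fun t : ℝ => (f t - c * (t : ℂ) ^ σ) / (t : ℂ))
      (volume.restrict (Ioc (0 : ℝ) 1)) := by
    have := (contH (c := c) (σ := σ) hf).mono (Ioc_subset_Ioi_self : Ioc (0:ℝ) 1 ⊆ Ioi 0)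
    exact this.aestronglyMeasurable measurableSet_Ioc
  refine ⟨hmeas, HasFiniteIntegral.restrict_of_bounded (C := C) measure_Ioc_lt_top ?_⟩
  filter_upwards [ae_restrict_mem measurableSet_Ioc] with t ht
  have htn : ‖(t : ℂ)‖ = t := by
    rw [Complex.norm_real, Real.norm_eq_abs, abs_of_pos ht.1]
  rw [norm_div, htn, div_le_iff₀ ht.1]
  calc ‖f t - c * (t : ℂ) ^ σ‖ ≤ C * t ^ 1 := hC t ht
    _ = C * t := by ring


/-- Integrability of `f t / t` on `(x,∞)` for `x > 0`, given rapid decay. -/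
private lemma intG {f : ℝ → ℂ} (hf : ContinuousOn f (Ioi (0 : ℝ)))
    (hrd : RapidDecayAtInfty f) {x : ℝ} (hx : 0 < x) :
    IntegrableOn (fun t : ℝ => f t / (t : ℂ)) (Ioi x) := by
  obtain ⟨C, hC⟩ := hrd 1
  have h1 : IntegrableOn (fun t : ℝ => f t / (t : ℂ)) (Ioi 1) := by
    have hdom : IntegrableOn (fun t : ℝ => C * t ^ (-2 : ℝ)) (Ioi (1 : ℝ)) :=
      (integrableOn_Ioi_rpow_of_lt (by norm_num) one_pos).const_mul C
    have hmeas : AEStronglyMeasurable (fun t : ℝ => f t / (t : ℂ))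
        (volume.restrict (Ioi (1 : ℝ))) :=
      ((contG hf).mono (Ioi_subset_Ioi zero_le_one)).aestronglyMeasurable measurableSet_Ioi
    refine hdom.mono' hmeas ?_
    filter_upwards [ae_restrict_mem measurableSet_Ioi] with t ht
    have ht0 : (0 : ℝ) < t := lt_trans one_pos ht
    have htn : ‖(t : ℂ)‖ = t := by
      rw [Complex.norm_real, Real.norm_eq_abs, abs_of_pos ht0]
    have hr : t ^ (-2 : ℝ) = 1 / (t * t) := by
      rw [show (-2 : ℝ) = (-2 : ℤ) by norm_num, Real.rpow_intCast, zpow_neg, zpow_two, one_div]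
    rw [norm_div, htn, hr]
    have hb := hC t (le_of_lt ht)
    rw [div_le_iff₀ ht0]
    calc ‖f t‖ ≤ C / t ^ 1 := hb
      _ = C * (1 / (t * t)) * t := by field_simp
  rcases le_total 1 x with h | h
  · exact h1.mono_set (Ioi_subset_Ioi h)
  · have h2 : IntegrableOn (fun t : ℝ => f t / (t : ℂ)) (Ioc x 1) := by
      have : IntegrableOn (fun t : ℝ => f t / (t : ℂ)) (Icc x 1) :=
        (ContinuousOn.integrableOn_Icc ((contG hf).mono (fun y hy => lt_of_lt_of_le hx hy.1)))
      exact this.mono_set Ioc_subset_Icc_self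
    have hu : Ioc x 1 ∪ Ioi 1 = Ioi x := Ioc_union_Ioi_eq_Ioi h
    rw [← hu]
    exact h2.union h1

/-- The leading coefficient of the rescaled function. -/
private lemma hlc_scale {σ : ℂ} {f : ℝ → ℂ} {c : ℂ} (hf : ContinuousOn f (Ioi (0 : ℝ)))
    (hlc : HasLeadingCoeff σ f c) {a : ℝ} (ha : 0 < a) :
    HasLeadingCoeff σ (fun t => f (a * t)) (c * (a : ℂ) ^ σ) := by
  intro N
  obtain ⟨C, hC⟩ := hlc N
  have hcomp : IsCompact (Icc (1 / a) (1 : ℝ)) := isCompact_Icc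
  have hcont : ContinuousOn (fun t : ℝ => f (a * t) - c * ((a * t : ℝ) : ℂ) ^ σ)
      (Icc (1 / a) 1) := by
    have hsub : ∀ t ∈ Icc (1 / a) (1 : ℝ), a * t ∈ Ioi (0 : ℝ) := by
      intro t ht
      have : (0 : ℝ) < 1 / a := by positivity
      exact mul_pos ha (lt_of_lt_of_le this ht.1)
    have hmul : ContinuousOn (fun t : ℝ => a * t) (Icc (1 / a) 1) :=
      (continuous_const.mul continuous_id).continuousOn
    exact (hf.comp hmul hsub).sub
      (continuousOn_const.mul ((cpow_contOn σ).comp hmul hsub))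
  obtain ⟨B, hB⟩ := hcomp.exists_bound_of_continuousOn hcont
  refine ⟨(max C 0 + max B 0) * a ^ N, ?_⟩
  rintro t ⟨ht0, ht1⟩
  have hat : (0 : ℝ) < a * t := mul_pos ha ht0
  have hrw : c * (a : ℂ) ^ σ * (t : ℂ) ^ σ = c * ((a * t : ℝ) : ℂ) ^ σ := by
    rw [Complex.ofReal_mul, Complex.mul_cpow_ofReal_nonneg ha.le ht0.le, mul_assoc]
  rw [hrw]
  by_cases hle : a * t ≤ 1
  · have hb := hC (a * t) ⟨hat, hle⟩
    have hCn : C ≤ max C 0 := le_max_left _ _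
    have h2 : (0 : ℝ) ≤ max B 0 * (a ^ N * t ^ N) := by positivity
    calc ‖f (a * t) - c * ((a * t : ℝ) : ℂ) ^ σ‖ ≤ C * (a * t) ^ N := hb
      _ = C * (a ^ N * t ^ N) := by rw [mul_pow]
      _ ≤ max C 0 * (a ^ N * t ^ N) := by
          have : (0 : ℝ) ≤ a ^ N * t ^ N := by positivity
          nlinarith
      _ ≤ (max C 0 + max B 0) * a ^ N * t ^ N := by nlinarith
  · push_neg at hle
    have hta : 1 / a ≤ t := by
      rw [div_le_iff₀ ha]
      nlinarith
    have htmem : t ∈ Icc (1 / a) (1 : ℝ) := ⟨hta, ht1⟩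
    have hb := hB t htmem
    have hBnn : (0 : ℝ) ≤ B := le_trans (norm_nonneg _) hb
    have h1le : (1 : ℝ) ≤ a ^ N * t ^ N := by
      rw [← mul_pow]
      exact one_le_pow₀ hle.le
    have hCn : (0 : ℝ) ≤ max C 0 * (a ^ N * t ^ N) := by positivity
    calc ‖f (a * t) - c * ((a * t : ℝ) : ℂ) ^ σ‖ ≤ B := hb
      _ ≤ max B 0 * (a ^ N * t ^ N) := by nlinarith [le_max_left B (0:ℝ)]
      _ ≤ (max C 0 + max B 0) * a ^ N * t ^ N := by nlinarith

/-- Splitting `∫_{(a,∞)}` as `∫_{(1,∞)} - ∫_1^a`. -/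
private lemma Ioi_shift {G : ℝ → ℂ} {a : ℝ}
    (h1 : IntegrableOn G (Ioi (1 : ℝ))) (ha' : IntegrableOn G (Ioi a)) :
    ∫ t in Ioi a, G t = (∫ t in Ioi (1 : ℝ), G t) - ∫ t in (1 : ℝ)..a, G t := by
  rcases le_total a 1 with h | h
  · have hu : Ioc a 1 ∪ Ioi 1 = Ioi a := Ioc_union_Ioi_eq_Ioi h
    have hioc : IntegrableOn G (Ioc a 1) :=
      ha'.mono_set (fun y hy => hy.1)
    rw [← hu, setIntegral_union Ioc_disjoint_Ioi_same measurableSet_Ioi hioc h1,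
      intervalIntegral.integral_symm, intervalIntegral.integral_of_le h]
    ring
  · have hu : Ioc 1 a ∪ Ioi a = Ioi 1 := Ioc_union_Ioi_eq_Ioi h
    have hioc : IntegrableOn G (Ioc 1 a) :=
      h1.mono_set (fun y hy => hy.1)
    rw [← hu, setIntegral_union Ioc_disjoint_Ioi_same measurableSet_Ioi hioc ha',
      intervalIntegral.integral_of_le h]
    ring

/-- For `σ ≠ 0`: the constant `c(f)` is unique, and the regularized integral `Λ` is a linear,
scaling-invariant functional on `W_σ`. -/
theorem stmt_8 (σ : ℂ) (hσ : σ ≠ 0) :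
    (∀ (f : ℝ → ℂ) (c c' : ℂ), MemWσ σ f c → MemWσ σ f c' → c = c') ∧
    (∀ (f g : ℝ → ℂ) (cf cg : ℂ), MemWσ σ f cf → MemWσ σ g cg →
      regInt σ (f + g) (cf + cg) = regInt σ f cf + regInt σ g cg) ∧
    (∀ (f : ℝ → ℂ) (cf z : ℂ), MemWσ σ f cf →
      regInt σ (z • f) (z * cf) = z * regInt σ f cf) ∧
    (∀ (f : ℝ → ℂ) (cf : ℂ) (a : ℝ), 0 < a → MemWσ σ f cf →
      ∀ ca : ℂ, MemWσ σ (fun t => f (a * t)) ca →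
        regInt σ (fun t => f (a * t)) ca = regInt σ f cf) := by
  refine ⟨fun f c c' h h' => hlc_unique h.2.2 h'.2.2, ?_, ?_, ?_⟩
  · -- additivity
    intro f g cf cg hf hg
    unfold regInt
    have hH : ∀ t : ℝ, ((f + g) t - (cf + cg) * (t : ℂ) ^ σ) / (t : ℂ)
        = (f t - cf * (t : ℂ) ^ σ) / (t : ℂ) + (g t - cg * (t : ℂ) ^ σ) / (t : ℂ) := by
      intro t; simp only [Pi.add_apply]; ring
    have hG : ∀ t : ℝ, (f + g) t / (t : ℂ) = f t / (t : ℂ) + g t / (t : ℂ) := by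
      intro t; simp only [Pi.add_apply]; ring
    simp_rw [hH, hG]
    rw [integral_add (intH01 hf.1.continuousOn hf.2.2) (intH01 hg.1.continuousOn hg.2.2),
      integral_add (intG hf.1.continuousOn hf.2.1 one_pos) (intG hg.1.continuousOn hg.2.1 one_pos)]
    ring
  · -- scalar multiplication
    intro f cf z hf
    unfold regInt
    have hH : ∀ t : ℝ, ((z • f) t - z * cf * (t : ℂ) ^ σ) / (t : ℂ)
        = z • ((f t - cf * (t : ℂ) ^ σ) / (t : ℂ)) := by
      intro t; simp only [Pi.smul_apply, smul_eq_mul]; ring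
    have hG : ∀ t : ℝ, (z • f) t / (t : ℂ) = z • (f t / (t : ℂ)) := by
      intro t; simp only [Pi.smul_apply, smul_eq_mul]; ring
    simp_rw [hH, hG, integral_smul]
    simp only [smul_eq_mul]
    ring
  · -- scaling invariance
    intro f cf a ha hf ca hfa
    have hca : ca = cf * (a : ℂ) ^ σ :=
      hlc_unique hfa.2.2 (hlc_scale hf.1.continuousOn hf.2.2 ha)
    have hfc : ContinuousOn f (Ioi (0 : ℝ)) := hf.1.continuousOn
    simp only [regInt, hca]
    set H : ℝ → ℂ := fun t => (f t - cf * (t : ℂ) ^ σ) / (t : ℂ) with hHdef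
    set G : ℝ → ℂ := fun t => f t / (t : ℂ) with hGdef
    have huIcc : uIcc (1 : ℝ) a ⊆ Ioi (0 : ℝ) := fun x hx =>
      lt_of_lt_of_le (lt_min one_pos ha) hx.1
    have hH01 : IntegrableOn H (Ioc 0 1) := intH01 hfc hf.2.2
    have h01 : IntervalIntegrable H volume 0 1 :=
      (intervalIntegrable_iff_integrableOn_Ioc_of_le zero_le_one).mpr hH01
    have hH1a : IntervalIntegrable H volume 1 a :=
      ContinuousOn.intervalIntegrable ((contH hfc).mono huIcc)
    have hG1 : IntegrableOn G (Ioi 1) := intG hfc hf.2.1 one_pos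
    have hGa : IntegrableOn G (Ioi a) := intG hfc hf.2.1 ha
    have hG1a : IntervalIntegrable G volume 1 a :=
      ContinuousOn.intervalIntegrable ((contG hfc).mono huIcc)
    have e1 : EqOn (fun t : ℝ => (f (a * t) - cf * (a : ℂ) ^ σ * (t : ℂ) ^ σ) / (t : ℂ))
        (fun t : ℝ => a • H (a * t)) (Ioc (0 : ℝ) 1) := by
      intro t ht
      have ht0 : (0 : ℝ) < t := ht.1
      have htC : (t : ℂ) ≠ 0 := by exact_mod_cast ne_of_gt ht0
      have haC : (a : ℂ) ≠ 0 := by exact_mod_cast ne_of_gt ha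
      simp only [hHdef, Complex.real_smul]
      rw [Complex.ofReal_mul, Complex.mul_cpow_ofReal_nonneg ha.le ht0.le]
      field_simp
    have e2 : EqOn (fun t : ℝ => f (a * t) / (t : ℂ))
        (fun t : ℝ => a • G (a * t)) (Ioi (1 : ℝ)) := by
      intro t ht
      have ht0 : (0 : ℝ) < t := lt_trans one_pos ht
      have htC : (t : ℂ) ≠ 0 := by exact_mod_cast ne_of_gt ht0
      have haC : (a : ℂ) ≠ 0 := by exact_mod_cast ne_of_gt ha
      simp only [hGdef, Complex.real_smul, Complex.ofReal_mul]
      field_simp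
    have step1 : (∫ t in Ioc (0 : ℝ) 1, (f (a * t) - cf * (a : ℂ) ^ σ * (t : ℂ) ^ σ) / (t : ℂ))
        = (∫ t in Ioc (0 : ℝ) 1, H t) + ∫ t in (1 : ℝ)..a, H t := by
      rw [setIntegral_congr_fun measurableSet_Ioc e1,
        ← intervalIntegral.integral_of_le (zero_le_one : (0 : ℝ) ≤ 1),
        intervalIntegral.integral_smul, intervalIntegral.smul_integral_comp_mul_left H a,
        mul_zero, mul_one, ← intervalIntegral.integral_add_adjacent_intervals h01 hH1a,
        intervalIntegral.integral_of_le (zero_le_one : (0 : ℝ) ≤ 1)]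
    have step2 : (∫ t in Ioi (1 : ℝ), f (a * t) / (t : ℂ))
        = (∫ t in Ioi (1 : ℝ), G t) - ∫ t in (1 : ℝ)..a, G t := by
      rw [setIntegral_congr_fun measurableSet_Ioi e2, integral_smul,
        integral_comp_mul_left_Ioi G 1 ha, mul_one, smul_smul,
        mul_inv_cancel₀ (ne_of_gt ha), one_smul]
      exact Ioi_shift hG1 hGa
    have e5 : EqOn (fun t : ℝ => H t - G t)
        (fun t : ℝ => -(cf * (t : ℂ) ^ (σ - 1))) (uIcc (1 : ℝ) a) := by
      intro t ht
      have ht0 : (0 : ℝ) < t := huIcc ht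
      have htC : (t : ℂ) ≠ 0 := by exact_mod_cast ne_of_gt ht0
      simp only [hHdef, hGdef]
      rw [Complex.cpow_sub _ _ htC, Complex.cpow_one]
      field_simp
      ring
    have hσ1 : σ - 1 ≠ -1 := fun h => hσ (by linear_combination h)
    have h0n : (0 : ℝ) ∉ Set.uIcc (1 : ℝ) a := fun h =>
      absurd h.1 (not_le.mpr (lt_min one_pos ha))
    have step5 : (∫ t in (1 : ℝ)..a, H t) - ∫ t in (1 : ℝ)..a, G t
        = -(cf * ((a : ℂ) ^ σ - 1) / σ) := by
      rw [← intervalIntegral.integral_sub hH1a hG1a, intervalIntegral.integral_congr e5,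
        intervalIntegral.integral_neg, intervalIntegral.integral_const_mul,
        integral_cpow (Or.inr ⟨hσ1, h0n⟩), sub_add_cancel]
      norm_num [mul_div_assoc]
    rw [step1, step2]
    linear_combination step5
end
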